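/- arXiv:math/0702404 — 6 statements merged into one kernel-verified Lean document; each statement's English description precedes it below -/
import Mathlib

section
/- The vector-valued rational function Y₂(z) = Σ_{k=1}^{3} M_k/(z − z_k) satisfies the KZ system with ρ = −1, i.e. Y₂'(z) = −A(z)·Y₂(z) for all z ∈ ℂ ∖ {z₁, z₂, z₃}. -/
/-!
Every `M_k` is a multiple of the all-ones vector `𝟙`, so `Y₂ = y·𝟙` for the scalar rational
function `y = Σ β_k/(z − z_k)`, and each permutation matrix fixes `𝟙`, so `A·Y₂ = (Σ 1/(z − z_k))·y·𝟙`.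
The KZ system thus reduces to the scalar equation `y' = −(Σ 1/(z − z_k))·y`, which holds because
`Σ β_k = 0` and `Σ β_k z_k = 0`.
-/

noncomputable section
open Matrix Polynomial

/-- The 4×4 permutation matrix (over ℂ) of the transposition exchanging coordinates `i` and `j`. -/
def permMat (i j : Fin 4) : Matrix (Fin 4) (Fin 4) ℂ :=
  Matrix.of fun k l => if l = Equiv.swap i j k then 1 else 0

/-- `P₁ = P(1,2)`. -/
def P1 : Matrix (Fin 4) (Fin 4) ℂ := permMat 0 1
/-- `P₂ = P(1,3)`. -/
def P2 : Matrix (Fin 4) (Fin 4) ℂ := permMat 0 2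
/-- `P₃ = P(1,4)`. -/
def P3 : Matrix (Fin 4) (Fin 4) ℂ := permMat 0 3

/-- `A(z) = Σ_{k=1}^{3} P_k/(z − z_k)`. -/
def Amat (z₁ z₂ z₃ z : ℂ) : Matrix (Fin 4) (Fin 4) ℂ :=
  (z - z₁)⁻¹ • P1 + (z - z₂)⁻¹ • P2 + (z - z₃)⁻¹ • P3

/-- `M_k = β_k·(1,1,1,1)ᵀ`, `β₁ = z₂ − z₃`, `β₂ = z₃ − z₁`, `β₃ = z₁ − z₂`. -/
def M1 (z₁ z₂ z₃ : ℂ) : Fin 4 → ℂ := (z₂ - z₃) • ![1, 1, 1, 1]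
def M2 (z₁ z₂ z₃ : ℂ) : Fin 4 → ℂ := (z₃ - z₁) • ![1, 1, 1, 1]
def M3 (z₁ z₂ z₃ : ℂ) : Fin 4 → ℂ := (z₁ - z₂) • ![1, 1, 1, 1]
/-- `Y₂(z) = Σ_{k=1}^{3} M_k/(z − z_k)`. -/
def Y2 (z₁ z₂ z₃ z : ℂ) : Fin 4 → ℂ :=
  (z - z₁)⁻¹ • M1 z₁ z₂ z₃ + (z - z₂)⁻¹ • M2 z₁ z₂ z₃ + (z - z₃)⁻¹ • M3 z₁ z₂ z₃

theorem permMat_mulVec_const (i j : Fin 4) (c : ℂ) :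
    permMat i j *ᵥ (fun _ => c) = fun _ => c := by
  funext k
  simp [permMat, mulVec, dotProduct]

theorem Amat_mulVec_const (z₁ z₂ z₃ z c : ℂ) :
    Amat z₁ z₂ z₃ z *ᵥ (fun _ => c) =
      fun _ => ((z - z₁)⁻¹ + (z - z₂)⁻¹ + (z - z₃)⁻¹) * c := by
  funext k
  simp only [Amat, P1, P2, P3, add_mulVec, smul_mulVec, permMat_mulVec_const, Pi.add_apply,
    Pi.smul_apply, smul_eq_mul]
  ring

def y2 (z₁ z₂ z₃ w : ℂ) : ℂ :=
  (z₂ - z₃) * (w - z₁)⁻¹ + (z₃ - z₁) * (w - z₂)⁻¹ + (z₁ - z₂) * (w - z₃)⁻¹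

theorem Y2_eq_const (z₁ z₂ z₃ w : ℂ) : Y2 z₁ z₂ z₃ w = fun _ => y2 z₁ z₂ z₃ w := by
  funext k
  fin_cases k <;>
    simp [Y2, M1, M2, M3, y2, mul_comm]

theorem hasDerivAt_sub_inv {𝕜 : Type*} [NontriviallyNormedField 𝕜] {z a : 𝕜} (h : z ≠ a) :
    HasDerivAt (fun w => (w - a)⁻¹) (-((z - a) ^ 2)⁻¹) z :=
  (hasDerivAt_inv (sub_ne_zero.mpr h)).comp_sub_const z a

/- Expanding the product, the square terms give the left side, and the cross terms cancel
because `Σ β_k = 0` and `Σ β_k z_k = 0`. -/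
theorem y2_mul_sum_inv {z₁ z₂ z₃ z : ℂ} (h₁ : z ≠ z₁) (h₂ : z ≠ z₂) (h₃ : z ≠ z₃) :
    (z₂ - z₃) * ((z - z₁) ^ 2)⁻¹ + (z₃ - z₁) * ((z - z₂) ^ 2)⁻¹ + (z₁ - z₂) * ((z - z₃) ^ 2)⁻¹ =
      ((z - z₁)⁻¹ + (z - z₂)⁻¹ + (z - z₃)⁻¹) * y2 z₁ z₂ z₃ z := by
  have hz₁ := sub_ne_zero.mpr h₁
  have hz₂ := sub_ne_zero.mpr h₂
  have hz₃ := sub_ne_zero.mpr h₃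
  unfold y2
  field_simp
  ring

theorem hasDerivAt_y2 {z₁ z₂ z₃ z : ℂ} (h₁ : z ≠ z₁) (h₂ : z ≠ z₂) (h₃ : z ≠ z₃) :
    HasDerivAt (y2 z₁ z₂ z₃)
      (-(((z - z₁)⁻¹ + (z - z₂)⁻¹ + (z - z₃)⁻¹) * y2 z₁ z₂ z₃ z)) z := by
  have h := (((hasDerivAt_sub_inv h₁).const_mul (z₂ - z₃)).add
    ((hasDerivAt_sub_inv h₂).const_mul (z₃ - z₁))).add
    ((hasDerivAt_sub_inv h₃).const_mul (z₁ - z₂))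
  rw [← y2_mul_sum_inv h₁ h₂ h₃]
  exact h.congr_deriv (by ring)

theorem stmt_1_general (z₁ z₂ z₃ : ℂ) :
    ∀ z : ℂ, z ≠ z₁ → z ≠ z₂ → z ≠ z₃ →
      HasDerivAt (fun w => Y2 z₁ z₂ z₃ w) (-(Amat z₁ z₂ z₃ z *ᵥ Y2 z₁ z₂ z₃ z)) z := by
  intro z h₁ h₂ h₃
  simp only [Y2_eq_const, Amat_mulVec_const]
  exact hasDerivAt_pi.mpr fun _ => hasDerivAt_y2 h₁ h₂ h₃

/-- `Y₂` satisfies `Y₂' = −A·Y₂` on `ℂ ∖ {z₁,z₂,z₃}`. -/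
theorem stmt_1 (z₁ z₂ z₃ : ℂ) (h12 : z₁ ≠ z₂) (h13 : z₁ ≠ z₃) (h23 : z₂ ≠ z₃) :
    ∀ z : ℂ, z ≠ z₁ → z ≠ z₂ → z ≠ z₃ →
      HasDerivAt (fun w => Y2 z₁ z₂ z₃ w) (-(Amat z₁ z₂ z₃ z *ᵥ Y2 z₁ z₂ z₃ z)) z :=
  stmt_1_general z₁ z₂ z₃
end
end

section
/- The vector-valued rational function Y₃(z) = Σ_{k=1}^{3} m_k/(z − z_k) satisfies the KZ system with ρ = −1, i.e. Y₃'(z) = −A(z)·Y₃(z) for all z ∈ ℂ ∖ {z₁, z₂, z₃}. -/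
/-!
Both `A` and `Y₃` have simple poles at `z₁, z₂, z₃`, with residues `P_k` and `m_k`. Expanding
`A·Y₃` by partial fractions, its double-pole part `Σ P_k m_k/(z - z_k)²` matches `-Y₃'` because
`P_k m_k = m_k`, and its simple-pole part at `z_j` has coefficient
`Σ_{k ≠ j} (P_j m_k + P_k m_j)/(z_j - z_k)`, which vanishes for the given vectors `m_k`.
-/

noncomputable section
open Matrix Polynomial

/-- `m₁ = β₁·(0,0,1,a)ᵀ` with `a = −β₁/β₃`. -/
def mv1 (z₁ z₂ z₃ : ℂ) : Fin 4 → ℂ := (z₂ - z₃) • ![0, 0, 1, -(z₂ - z₃) / (z₁ - z₂)]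
/-- `m₂ = β₂·(0,b,0,c)ᵀ` with `b = −β₃/β₂`, `c = β₁²/(β₂β₃)`. -/
def mv2 (z₁ z₂ z₃ : ℂ) : Fin 4 → ℂ :=
  (z₃ - z₁) • ![0, -(z₁ - z₂) / (z₃ - z₁), 0, (z₂ - z₃) ^ 2 / ((z₃ - z₁) * (z₁ - z₂))]
/-- `m₃ = β₃·(0,1,a,0)ᵀ`. -/
def mv3 (z₁ z₂ z₃ : ℂ) : Fin 4 → ℂ := (z₁ - z₂) • ![0, 1, -(z₂ - z₃) / (z₁ - z₂), 0]
/-- `Y₃(z) = Σ_{k=1}^{3} m_k/(z − z_k)`. -/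
def Y3 (z₁ z₂ z₃ z : ℂ) : Fin 4 → ℂ :=
  (z - z₁)⁻¹ • mv1 z₁ z₂ z₃ + (z - z₂)⁻¹ • mv2 z₁ z₂ z₃ + (z - z₃)⁻¹ • mv3 z₁ z₂ z₃

open Finset

theorem inv_sub_mul_inv_sub {K : Type*} [Field K] {a b w : K} (hab : a ≠ b) (ha : w ≠ a)
    (hb : w ≠ b) : (w - a)⁻¹ * (w - b)⁻¹ = (a - b)⁻¹ * ((w - a)⁻¹ - (w - b)⁻¹) := by
  have := sub_ne_zero.2 ha
  have := sub_ne_zero.2 hb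
  have := sub_ne_zero.2 hab
  field_simp
  ring

section SimplePoles

variable {𝕜 : Type*} [NontriviallyNormedField 𝕜] {ι : Type*} [Fintype ι]

theorem sum_sum_antisymm_mul_sub_smul {K E : Type*} [CommRing K] [AddCommGroup E] [Module K E]
    (c : ι → ι → K) (hc : ∀ j k, c k j = -c j k) (u : ι → K) (X : ι → ι → E) :
    ∑ j, ∑ k, (c j k * (u j - u k)) • X j k = ∑ j, u j • ∑ k, c j k • (X j k + X k j) := by
  have hswap : ∑ j, ∑ k, (c j k * u k) • X j k = -∑ j, ∑ k, (c j k * u j) • X k j := by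
    rw [Finset.sum_comm, ← Finset.sum_neg_distrib]
    refine Finset.sum_congr rfl fun j _ => ?_
    rw [← Finset.sum_neg_distrib]
    refine Finset.sum_congr rfl fun k _ => ?_
    rw [hc, neg_mul, neg_smul]
  simp only [mul_sub, sub_smul, Finset.sum_sub_distrib, hswap, sub_neg_eq_add,
    ← Finset.sum_add_distrib, Finset.smul_sum, smul_add, smul_smul, mul_comm (u _)]

def simplePoleSum {E : Type*} [AddCommGroup E] [Module 𝕜 E] (z : ι → 𝕜) (m : ι → E)
    (w : 𝕜) : E :=
  ∑ k, (w - z k)⁻¹ • m k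

theorem hasDerivAt_simplePoleSum {E : Type*} [NormedAddCommGroup E] [NormedSpace 𝕜 E]
    (z : ι → 𝕜) (m : ι → E) {w : 𝕜} (hw : ∀ k, w ≠ z k) :
    HasDerivAt (simplePoleSum z m) (-∑ k, ((w - z k) ^ 2)⁻¹ • m k) w := by
  have hterm : ∀ k, HasDerivAt (fun w => (w - z k)⁻¹ • m k) (-(((w - z k) ^ 2)⁻¹ • m k)) w :=
    fun k => by
      simpa [neg_div] using
        (((hasDerivAt_id w).sub_const (z k)).inv (sub_ne_zero.2 (hw k))).smul_const (m k)
  rw [← Finset.sum_neg_distrib]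
  exact HasDerivAt.fun_sum fun k _ => hterm k

variable [DecidableEq ι] {n : Type*} [Fintype n] {z : ι → 𝕜} {P : ι → Matrix n n 𝕜}
  {m : ι → n → 𝕜}

theorem sum_smul_mulVec_simplePoleSum (hz : Function.Injective z)
    (hfix : ∀ k, P k *ᵥ m k = m k)
    (hres : ∀ j, ∑ k ∈ univ.erase j, (z j - z k)⁻¹ • (P j *ᵥ m k + P k *ᵥ m j) = 0)
    {w : 𝕜} (hw : ∀ k, w ≠ z k) :
    (∑ j, (w - z j)⁻¹ • P j) *ᵥ simplePoleSum z m w = ∑ k, ((w - z k) ^ 2)⁻¹ • m k := by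
  set u : ι → 𝕜 := fun k => (w - z k)⁻¹
  -- The diagonal terms added to the sums below vanish since `(z j - z j)⁻¹ = 0`.
  have hoff : ∀ j, ∑ k ∈ univ.erase j, (u j * u k) • (P j *ᵥ m k) =
      ∑ k, ((z j - z k)⁻¹ * (u j - u k)) • (P j *ᵥ m k) := fun j => by
    rw [← Finset.sum_erase univ (a := j)
      (f := fun k => ((z j - z k)⁻¹ * (u j - u k)) • (P j *ᵥ m k)) (by simp)]
    refine Finset.sum_congr rfl fun k hk => ?_
    rw [inv_sub_mul_inv_sub (hz.ne (Finset.ne_of_mem_erase hk).symm) (hw j) (hw k)]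
  have hres' : ∀ j, ∑ k, (z j - z k)⁻¹ • (P j *ᵥ m k + P k *ᵥ m j) = 0 := fun j => by
    rw [← hres j, Finset.sum_erase _ (by simp)]
  calc (∑ j, (w - z j)⁻¹ • P j) *ᵥ simplePoleSum z m w
      = ∑ j, ∑ k, (u j * u k) • (P j *ᵥ m k) := by
        simp only [simplePoleSum, Matrix.sum_mulVec, Matrix.mulVec_sum, Matrix.smul_mulVec,
          Matrix.mulVec_smul, Finset.smul_sum, smul_smul, u]
        rw [Finset.sum_comm]
        exact Finset.sum_congr rfl fun j _ => Finset.sum_congr rfl fun k _ => by rw [mul_comm]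
    _ = ∑ j, (u j ^ 2) • m j + ∑ j, u j • ∑ k, (z j - z k)⁻¹ • (P j *ᵥ m k + P k *ᵥ m j) := by
        rw [← sum_sum_antisymm_mul_sub_smul (fun j k => (z j - z k)⁻¹)
          (fun j k => by rw [← neg_sub, inv_neg]), ← Finset.sum_add_distrib]
        refine Finset.sum_congr rfl fun j _ => ?_
        rw [← Finset.add_sum_erase _ _ (Finset.mem_univ j), hoff, hfix, sq]
    _ = ∑ k, ((w - z k) ^ 2)⁻¹ • m k := by
        simp only [hres', smul_zero, Finset.sum_const_zero, add_zero, u, inv_pow]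

theorem hasDerivAt_simplePoleSum_of_residue (hz : Function.Injective z)
    (hfix : ∀ k, P k *ᵥ m k = m k)
    (hres : ∀ j, ∑ k ∈ univ.erase j, (z j - z k)⁻¹ • (P j *ᵥ m k + P k *ᵥ m j) = 0)
    {w : 𝕜} (hw : ∀ k, w ≠ z k) :
    HasDerivAt (simplePoleSum z m) (-((∑ j, (w - z j)⁻¹ • P j) *ᵥ simplePoleSum z m w)) w := by
  rw [sum_smul_mulVec_simplePoleSum hz hfix hres hw]
  exact hasDerivAt_simplePoleSum z m hw

end SimplePoles

theorem permMat_mulVec (i j : Fin 4) (v : Fin 4 → ℂ) : permMat i j *ᵥ v = v ∘ Equiv.swap i j := by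
  ext k
  simp [permMat, Matrix.mulVec, dotProduct]

section KZ

variable (z₁ z₂ z₃ : ℂ)

def kzPoles : Fin 3 → ℂ := ![z₁, z₂, z₃]

def kzMatrices : Fin 3 → Matrix (Fin 4) (Fin 4) ℂ := ![P1, P2, P3]

def kzVectors : Fin 3 → Fin 4 → ℂ := ![mv1 z₁ z₂ z₃, mv2 z₁ z₂ z₃, mv3 z₁ z₂ z₃]

theorem Amat_eq_sum (w : ℂ) :
    Amat z₁ z₂ z₃ w = ∑ j, (w - kzPoles z₁ z₂ z₃ j)⁻¹ • kzMatrices j := by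
  simp [Amat, kzPoles, kzMatrices, Fin.sum_univ_three]

theorem Y3_eq_simplePoleSum :
    Y3 z₁ z₂ z₃ = simplePoleSum (kzPoles z₁ z₂ z₃) (kzVectors z₁ z₂ z₃) := by
  ext w : 1
  simp [Y3, simplePoleSum, kzPoles, kzVectors, Fin.sum_univ_three]

theorem kzMatrices_mulVec_kzVectors_self (k : Fin 3) :
    kzMatrices k *ᵥ kzVectors z₁ z₂ z₃ k = kzVectors z₁ z₂ z₃ k := by
  fin_cases k <;> ext i <;> fin_cases i <;>
    simp [kzMatrices, kzVectors, P1, P2, P3, permMat_mulVec, mv1, mv2, mv3,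
      Equiv.swap_apply_of_ne_of_ne]

variable {z₁ z₂ z₃}

theorem kzPoles_injective (h12 : z₁ ≠ z₂) (h13 : z₁ ≠ z₃) (h23 : z₂ ≠ z₃) :
    Function.Injective (kzPoles z₁ z₂ z₃) := by
  intro a b
  fin_cases a <;> fin_cases b <;> simp [kzPoles, h12, h13, h23, h12.symm, h13.symm, h23.symm]

theorem kzVectors_residue (h12 : z₁ ≠ z₂) (h13 : z₁ ≠ z₃) (h23 : z₂ ≠ z₃) (j : Fin 3) :
    ∑ k ∈ univ.erase j, (kzPoles z₁ z₂ z₃ j - kzPoles z₁ z₂ z₃ k)⁻¹ •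
      (kzMatrices j *ᵥ kzVectors z₁ z₂ z₃ k + kzMatrices k *ᵥ kzVectors z₁ z₂ z₃ j) = 0 := by
  have := sub_ne_zero.2 h12
  have := sub_ne_zero.2 h13
  have := sub_ne_zero.2 h23
  have := sub_ne_zero.2 h13.symm
  rw [Finset.sum_erase _ (by simp)]
  fin_cases j <;> ext i <;> fin_cases i <;>
    simp [Fin.sum_univ_three, kzPoles, kzMatrices, kzVectors, P1, P2, P3, permMat_mulVec,
      mv1, mv2, mv3, Equiv.swap_apply_of_ne_of_ne] <;>
    field_simp <;> ring

end KZ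

/-- `Y₃` satisfies `Y₃' = −A·Y₃` on `ℂ ∖ {z₁,z₂,z₃}`. -/
theorem stmt_2 (z₁ z₂ z₃ : ℂ) (h12 : z₁ ≠ z₂) (h13 : z₁ ≠ z₃) (h23 : z₂ ≠ z₃) :
    ∀ z : ℂ, z ≠ z₁ → z ≠ z₂ → z ≠ z₃ →
      HasDerivAt (fun w => Y3 z₁ z₂ z₃ w) (-(Amat z₁ z₂ z₃ z *ᵥ Y3 z₁ z₂ z₃ z)) z := by
  intro z hz1 hz2 hz3
  have hz : ∀ k, z ≠ kzPoles z₁ z₂ z₃ k := by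
    intro k
    fin_cases k <;> assumption
  rw [Amat_eq_sum, Y3_eq_simplePoleSum]
  exact hasDerivAt_simplePoleSum_of_residue (kzPoles_injective h12 h13 h23)
    (kzMatrices_mulVec_kzVectors_self z₁ z₂ z₃) (kzVectors_residue h12 h13 h23) hz
end
end

section
/- (Conjecture 1.1 for S₄, ρ = −1) The Knizhnik–Zamolodchikov system for S₄ with parameter ρ = −1 has a rational fundamental matrix solution: there exists a 4×4 matrix-valued function W whose entries are rational functions of z (quotients of complex polynomials), such that W'(z) = −A(z)·W(z) for all z ∈ ℂ ∖ {z₁, z₂, z₃}, and det W(z) ≠ 0 for some z ∈ ℂ ∖ {z₁, z₂, z₃}. -/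
/-!
Clearing the denominator `D = (z - z₁)(z - z₂)(z - z₃)` of `A`, a matrix `W = N / D` with
polynomial `N` solves `W' = -A W` off the poles as soon as `N' D - N D' = -(D A) N`, an
identity of polynomial matrices. An explicit `N` of degree at most four satisfies it, and
`det N = 12 D²`, so `det W = 12 / D²` vanishes nowhere off the poles.
-/

noncomputable section
open Matrix Polynomial

section RationalSolution

variable {𝕜 ι κ : Type*} [NontriviallyNormedField 𝕜]

theorem of_eval_div_eval (N : Matrix ι κ 𝕜[X]) (D : 𝕜[X]) (z : 𝕜) :
    (Matrix.of fun k l => (N k l).eval z / D.eval z) = (D.eval z)⁻¹ • N.map (eval z) := by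
  ext k l
  simp [div_eq_inv_mul]

theorem det_of_eval_div_eval [Fintype ι] [DecidableEq ι] (N : Matrix ι ι 𝕜[X]) (D : 𝕜[X])
    (z : 𝕜) :
    (Matrix.of fun k l => (N k l).eval z / D.eval z).det
      = N.det.eval z / D.eval z ^ Fintype.card ι := by
  rw [of_eval_div_eval, det_smul, ← coe_evalRingHom, RingHom.map_det, inv_pow, inv_mul_eq_div]
  rfl

variable [Fintype ι] [Fintype κ]

theorem hasDerivAt_eval_div_eval_of_derivative_eq (N : Matrix ι κ 𝕜[X]) (D : 𝕜[X])
    (B : Matrix ι ι 𝕜[X])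
    (hND : ∀ i j, derivative (N i j) * D - N i j * derivative D = -(B * N) i j)
    (A : Matrix ι ι 𝕜) {z : 𝕜} (hz : D.eval z ≠ 0) (hA : B.map (eval z) = D.eval z • A) :
    HasDerivAt (fun w i j => (N i j).eval w / D.eval w)
      (fun i j => (-(A * Matrix.of fun k l => (N k l).eval z / D.eval z)) i j) z := by
  refine hasDerivAt_pi.mpr fun i => hasDerivAt_pi.mpr fun j => ?_
  have hBN : ((B * N) i j).eval z = D.eval z * (A * N.map (eval z)) i j := by
    have := congrFun (congrFun (Matrix.map_mul (f := evalRingHom z) (L := B) (M := N)) i) j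
    simp only [map_apply, coe_evalRingHom] at this
    rw [this, hA, Matrix.smul_mul, Matrix.smul_apply, smul_eq_mul]
  refine (((N i j).hasDerivAt z).div (D.hasDerivAt z) hz).congr_deriv ?_
  rw [← eval_mul, ← eval_mul, ← eval_sub, hND, eval_neg, hBN, of_eval_div_eval, Matrix.mul_smul,
    Matrix.neg_apply, Matrix.smul_apply, smul_eq_mul]
  field_simp

end RationalSolution

section KZ

variable (z₁ z₂ z₃ : ℂ)

def kzDenom : ℂ[X] := (X - C z₁) * (X - C z₂) * (X - C z₃)

def kzClearedAmat : Matrix (Fin 4) (Fin 4) ℂ[X] :=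
  ((X - C z₂) * (X - C z₃)) • P1.map C + ((X - C z₁) * (X - C z₃)) • P2.map C
    + ((X - C z₁) * (X - C z₂)) • P3.map C

def kzNumer : Matrix (Fin 4) (Fin 4) ℂ[X] :=
  !![1, 0, 0,
      -3 * X ^ 4 + 4 * (C z₁ + C z₂ + C z₃) * X ^ 3
        - 6 * (C z₁ * C z₂ + C z₁ * C z₃ + C z₂ * C z₃) * X ^ 2 + 12 * C z₁ * C z₂ * C z₃ * X;
    1, -(X - C z₁), -(X - C z₁),
      X ^ 4 - 2 * (C z₂ + C z₃) * X ^ 3 + 6 * C z₂ * C z₃ * X ^ 2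
        - 4 * C z₁ * C z₂ * C z₃ * (X - C z₁);
    1, X - C z₂, 0,
      X ^ 4 - 2 * (C z₁ + C z₃) * X ^ 3 + 6 * C z₁ * C z₃ * X ^ 2
        - 4 * C z₁ * C z₂ * C z₃ * (X - C z₂);
    1, 0, X - C z₃,
      X ^ 4 - 2 * (C z₁ + C z₂) * X ^ 3 + 6 * C z₁ * C z₂ * X ^ 2
        - 4 * C z₁ * C z₂ * C z₃ * (X - C z₃)]

theorem kzDenom_ne_zero : kzDenom z₁ z₂ z₃ ≠ 0 :=
  (((monic_X_sub_C z₁).mul (monic_X_sub_C z₂)).mul (monic_X_sub_C z₃)).ne_zero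

variable {z₁ z₂ z₃} in
theorem eval_kzDenom_ne_zero {z : ℂ} (h₁ : z ≠ z₁) (h₂ : z ≠ z₂) (h₃ : z ≠ z₃) :
    (kzDenom z₁ z₂ z₃).eval z ≠ 0 := by
  simp only [kzDenom, eval_mul, eval_sub, eval_X, eval_C]
  exact mul_ne_zero (mul_ne_zero (sub_ne_zero.2 h₁) (sub_ne_zero.2 h₂)) (sub_ne_zero.2 h₃)

variable {z₁ z₂ z₃} in
theorem map_eval_kzClearedAmat {z : ℂ} (h₁ : z ≠ z₁) (h₂ : z ≠ z₂) (h₃ : z ≠ z₃) :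
    (kzClearedAmat z₁ z₂ z₃).map (eval z) = (kzDenom z₁ z₂ z₃).eval z • Amat z₁ z₂ z₃ z := by
  have h₁ := sub_ne_zero.2 h₁
  have h₂ := sub_ne_zero.2 h₂
  have h₃ := sub_ne_zero.2 h₃
  ext i j
  simp only [kzClearedAmat, kzDenom, Amat, map_apply, Matrix.add_apply, Matrix.smul_apply,
    smul_eq_mul, eval_add, eval_mul, eval_sub, eval_X, eval_C]
  field_simp

theorem kzNumer_derivative (i j : Fin 4) :
    derivative (kzNumer z₁ z₂ z₃ i j) * kzDenom z₁ z₂ z₃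
      - kzNumer z₁ z₂ z₃ i j * derivative (kzDenom z₁ z₂ z₃)
      = -(kzClearedAmat z₁ z₂ z₃ * kzNumer z₁ z₂ z₃) i j := by
  fin_cases i <;> fin_cases j <;>
    simp [kzNumer, kzDenom, kzClearedAmat, P1, P2, P3, permMat, Matrix.mul_apply,
      Fin.sum_univ_four, Equiv.swap_apply_def, C_ofNat] <;> ring

theorem det_kzNumer : (kzNumer z₁ z₂ z₃).det = 12 * kzDenom z₁ z₂ z₃ ^ 2 := by
  rw [Matrix.det_succ_row_zero]
  simp [Fin.sum_univ_succ, det_fin_three, kzNumer, kzDenom, Fin.succAbove]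
  ring

end KZ

theorem stmt_6_general (z₁ z₂ z₃ : ℂ) :
    ∃ W : ℂ → Fin 4 → Fin 4 → ℂ,
      (∀ i j : Fin 4, ∃ p q : Polynomial ℂ, q ≠ 0 ∧
        ∀ z : ℂ, z ≠ z₁ → z ≠ z₂ → z ≠ z₃ →
          q.eval z ≠ 0 ∧ W z i j = p.eval z / q.eval z) ∧
      (∀ z : ℂ, z ≠ z₁ → z ≠ z₂ → z ≠ z₃ →
        HasDerivAt (fun w => W w)
          (fun i j => (-(Amat z₁ z₂ z₃ z * Matrix.of (W z))) i j) z) ∧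
      ∃ z : ℂ, z ≠ z₁ ∧ z ≠ z₂ ∧ z ≠ z₃ ∧ (Matrix.of (W z)).det ≠ 0 := by
  refine ⟨fun z i j => (kzNumer z₁ z₂ z₃ i j).eval z / (kzDenom z₁ z₂ z₃).eval z, ?_, ?_, ?_⟩
  · exact fun i j => ⟨_, _, kzDenom_ne_zero z₁ z₂ z₃,
      fun z h₁ h₂ h₃ => ⟨eval_kzDenom_ne_zero h₁ h₂ h₃, rfl⟩⟩
  · intro z h₁ h₂ h₃
    exact hasDerivAt_eval_div_eval_of_derivative_eq _ _ _ (kzNumer_derivative z₁ z₂ z₃) _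
      (eval_kzDenom_ne_zero h₁ h₂ h₃) (map_eval_kzClearedAmat h₁ h₂ h₃)
  · obtain ⟨z, hz⟩ := ({z₁, z₂, z₃} : Set ℂ).toFinite.infinite_compl.nonempty
    simp only [Set.mem_compl_iff, Set.mem_insert_iff, Set.mem_singleton_iff, not_or] at hz
    obtain ⟨h₁, h₂, h₃⟩ := hz
    have hD := eval_kzDenom_ne_zero h₁ h₂ h₃
    refine ⟨z, h₁, h₂, h₃, ?_⟩
    rw [det_of_eval_div_eval, det_kzNumer, eval_mul, eval_pow]
    simp [hD]

/-- Conjecture 1.1, case `S₄`, `ρ = −1`: the KZ system has a rational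
fundamental matrix solution. -/
theorem stmt_6 (z₁ z₂ z₃ : ℂ) (h12 : z₁ ≠ z₂) (h13 : z₁ ≠ z₃) (h23 : z₂ ≠ z₃) :
    ∃ W : ℂ → Fin 4 → Fin 4 → ℂ,
      (∀ i j : Fin 4, ∃ p q : Polynomial ℂ, q ≠ 0 ∧
        ∀ z : ℂ, z ≠ z₁ → z ≠ z₂ → z ≠ z₃ →
          q.eval z ≠ 0 ∧ W z i j = p.eval z / q.eval z) ∧
      (∀ z : ℂ, z ≠ z₁ → z ≠ z₂ → z ≠ z₃ →
        HasDerivAt (fun w => W w)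
          (fun i j => (-(Amat z₁ z₂ z₃ z * Matrix.of (W z))) i j) z) ∧
      ∃ z : ℂ, z ≠ z₁ ∧ z ≠ z₂ ∧ z ≠ z₃ ∧ (Matrix.of (W z)).det ≠ 0 :=
  stmt_6_general z₁ z₂ z₃
end
end

section
/- Let L₁, L₂, L₃, Q₋₁, Q₀ be arbitrary vectors in ℂ⁴ and set W(z) = Σ_{k=1}^{3} L_k/(z − z_k) + Q₋₁·z + Q₀. Then W satisfies W'(z) = −A(z)·W(z) for all z ∈ ℂ ∖ {z₁, z₂, z₃} if and only if the following three conditions hold: (i) (I − P_k)L_k = 0 for k = 1, 2, 3; (ii) Σ_{j ≠ k} (P_k L_j + P_j L_k)/(z_k − z_j) + P_k·(Q₋₁·z_k + Q₀) = 0 for k = 1, 2, 3; (iii) Q₋₁ = −T·Q₋₁, where T = P₁ + P₂ + P₃. -/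
noncomputable section
open Matrix Polynomial

/-!
Since `W` has the explicit derivative `W' = -Σ L_k/(z - z_k)² + Q₋₁`, the equation
`W' + A W = 0` is an identity between rational functions. Expanding the products
`P_j L_k / ((z - z_j)(z - z_k))` and `P_k (Q₋₁ z + Q₀)/(z - z_k)` into partial fractions writes
`W' + A W` as `Σ_k [-(I - P_k) L_k/(z - z_k)² + R_k/(z - z_k)] + (Q₋₁ + T Q₋₁)`, where `R_k` is
the left-hand side of (ii). Such a Laurent-type expansion vanishes off the poles only if all
its coefficients vanish: multiplying by `(z - z_k)²` and letting `z → z_k` kills the double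
pole coefficient, then the simple one, and the constant is what remains.
-/

open Filter Topology

section

variable {E : Type*} [NormedAddCommGroup E] [NormedSpace ℂ E]

theorem eq_zero_of_eventually_laurent_eq_zero {w : ℂ} {a b : E} {g : ℂ → E}
    (hg : ContinuousAt g w)
    (h : ∀ᶠ z in 𝓝[≠] w, ((z - w) ^ 2)⁻¹ • a + (z - w)⁻¹ • b + g z = 0) :
    a = 0 ∧ b = 0 := by
  have hw : ∀ᶠ z in 𝓝[≠] w, z - w ≠ 0 :=
    eventually_mem_nhdsWithin.mono fun z hz => sub_ne_zero.mpr hz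
  have value_eq_zero {f : ℂ → E} (hf : ContinuousAt f w) (h : f =ᶠ[𝓝[≠] w] 0) : f w = 0 :=
    tendsto_nhds_unique_of_eventuallyEq (hf.tendsto.mono_left nhdsWithin_le_nhds)
      tendsto_const_nhds h
  have ha : a + (w - w) • b + (w - w) ^ 2 • g w = 0 := by
    refine value_eq_zero (f := fun z => a + (z - w) • b + (z - w) ^ 2 • g z) (by fun_prop) ?_
    filter_upwards [h, hw] with z hz hzw
    have := congrArg ((z - w) ^ 2 • ·) hz
    simpa [smul_add, smul_smul, hzw, pow_two, mul_assoc] using this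
  simp only [sub_self, zero_smul, add_zero, ne_eq, OfNat.ofNat_ne_zero, not_false_eq_true,
    zero_pow] at ha
  subst ha
  have hb : b + (w - w) • g w = 0 := by
    refine value_eq_zero (f := fun z => b + (z - w) • g z) (by fun_prop) ?_
    filter_upwards [h, hw] with z hz hzw
    have := congrArg ((z - w) • ·) hz
    simpa [smul_add, smul_smul, hzw] using this
  simpa using hb

theorem laurent_coeffs_eq_zero {ι : Type*} [Fintype ι] {w : ι → ℂ} (hw : Function.Injective w)
    {a b : ι → E} {d : E}
    (h : ∀ z, (∀ k, z ≠ w k) → ∑ k, (((z - w k) ^ 2)⁻¹ • a k + (z - w k)⁻¹ • b k) + d = 0) :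
    (∀ k, a k = 0 ∧ b k = 0) ∧ d = 0 := by
  classical
  have hab : ∀ k, a k = 0 ∧ b k = 0 := by
    intro k
    refine eq_zero_of_eventually_laurent_eq_zero (w := w k)
      (g := fun z => ∑ j ∈ Finset.univ.erase k,
        (((z - w j) ^ 2)⁻¹ • a j + (z - w j)⁻¹ • b j) + d) ?_ ?_
    · refine (tendsto_finsetSum _ fun j hj => ?_).add tendsto_const_nhds
      have hjk : w k - w j ≠ 0 := sub_ne_zero.mpr (hw.ne (Finset.ne_of_mem_erase hj).symm)
      exact ContinuousAt.add (by fun_prop (disch := simpa using hjk))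
        (by fun_prop (disch := exact hjk))
    · have hoff : ∀ᶠ z in 𝓝[≠] w k, ∀ j, z ≠ w j := by
        refine eventually_all.mpr fun j => ?_
        obtain rfl | hjk := eq_or_ne j k
        · exact eventually_mem_nhdsWithin
        · exact nhdsWithin_le_nhds (eventually_ne_nhds (hw.ne hjk.symm))
      filter_upwards [hoff] with z hz
      rw [← h z hz, ← Finset.add_sum_erase _ _ (Finset.mem_univ k)]
      abel
  refine ⟨hab, ?_⟩
  obtain ⟨z, hz⟩ := (Set.finite_range w).infinite_compl.nonempty
  simpa [hab] using h z fun k hk => hz ⟨k, hk.symm⟩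

theorem laurent_coeffs_eq_zero_of_three {w₁ w₂ w₃ : ℂ} (h12 : w₁ ≠ w₂) (h13 : w₁ ≠ w₃)
    (h23 : w₂ ≠ w₃) {a₁ a₂ a₃ b₁ b₂ b₃ d : E}
    (h : ∀ z, z ≠ w₁ → z ≠ w₂ → z ≠ w₃ →
      ((z - w₁) ^ 2)⁻¹ • a₁ + (z - w₁)⁻¹ • b₁ + (((z - w₂) ^ 2)⁻¹ • a₂ + (z - w₂)⁻¹ • b₂)
        + (((z - w₃) ^ 2)⁻¹ • a₃ + (z - w₃)⁻¹ • b₃) + d = 0) :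
    (a₁ = 0 ∧ b₁ = 0) ∧ (a₂ = 0 ∧ b₂ = 0) ∧ (a₃ = 0 ∧ b₃ = 0) ∧ d = 0 := by
  have hw : Function.Injective ![w₁, w₂, w₃] := by
    intro i j
    fin_cases i <;> fin_cases j <;> simp [h12, h13, h23, h12.symm, h13.symm, h23.symm]
  obtain ⟨hab, hd⟩ := laurent_coeffs_eq_zero hw (a := ![a₁, a₂, a₃]) (b := ![b₁, b₂, b₃]) (d := d)
    fun z hz => by simpa [Fin.sum_univ_three] using h z (hz 0) (hz 1) (hz 2)
  exact ⟨hab 0, hab 1, hab 2, hd⟩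

theorem hasDerivAt_inv_sub_smul {z w : ℂ} (hz : z ≠ w) (L : E) :
    HasDerivAt (fun x => (x - w)⁻¹ • L) (-((z - w) ^ 2)⁻¹ • L) z :=
  ((hasDerivAt_inv (sub_ne_zero.mpr hz)).comp_sub_const z w).smul_const L

theorem hasDerivAt_three_poles_add_affine {z₁ z₂ z₃ z : ℂ} (hz1 : z ≠ z₁) (hz2 : z ≠ z₂)
    (hz3 : z ≠ z₃) (L₁ L₂ L₃ Qm Qz : E) :
    HasDerivAt (fun w => (w - z₁)⁻¹ • L₁ + (w - z₂)⁻¹ • L₂ + (w - z₃)⁻¹ • L₃ + w • Qm + Qz)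
      (-((z - z₁) ^ 2)⁻¹ • L₁ + -((z - z₂) ^ 2)⁻¹ • L₂ + -((z - z₃) ^ 2)⁻¹ • L₃ + Qm) z := by
  simpa using ((((hasDerivAt_inv_sub_smul hz1 L₁).add (hasDerivAt_inv_sub_smul hz2 L₂)).add
    (hasDerivAt_inv_sub_smul hz3 L₃)).add ((hasDerivAt_id z).smul_const Qm)).add_const Qz

end

theorem three_poles_deriv_add_mulVec_eq {K n : Type*} [Field K] [Fintype n] [DecidableEq n]
    {z₁ z₂ z₃ z : K} (h12 : z₁ ≠ z₂) (h13 : z₁ ≠ z₃) (h23 : z₂ ≠ z₃)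
    (hz1 : z ≠ z₁) (hz2 : z ≠ z₂) (hz3 : z ≠ z₃) (B₁ B₂ B₃ : Matrix n n K)
    (L₁ L₂ L₃ Qm Qz : n → K) :
    (-((z - z₁) ^ 2)⁻¹ • L₁ + -((z - z₂) ^ 2)⁻¹ • L₂ + -((z - z₃) ^ 2)⁻¹ • L₃ + Qm)
      + ((z - z₁)⁻¹ • B₁ + (z - z₂)⁻¹ • B₂ + (z - z₃)⁻¹ • B₃) *ᵥ
        ((z - z₁)⁻¹ • L₁ + (z - z₂)⁻¹ • L₂ + (z - z₃)⁻¹ • L₃ + z • Qm + Qz)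
    = ((z - z₁) ^ 2)⁻¹ • -((1 - B₁) *ᵥ L₁)
      + (z - z₁)⁻¹ • ((z₁ - z₂)⁻¹ • (B₁ *ᵥ L₂ + B₂ *ᵥ L₁)
          + (z₁ - z₃)⁻¹ • (B₁ *ᵥ L₃ + B₃ *ᵥ L₁) + B₁ *ᵥ (z₁ • Qm + Qz))
      + (((z - z₂) ^ 2)⁻¹ • -((1 - B₂) *ᵥ L₂)
      + (z - z₂)⁻¹ • ((z₂ - z₁)⁻¹ • (B₂ *ᵥ L₁ + B₁ *ᵥ L₂)
          + (z₂ - z₃)⁻¹ • (B₂ *ᵥ L₃ + B₃ *ᵥ L₂) + B₂ *ᵥ (z₂ • Qm + Qz)))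
      + (((z - z₃) ^ 2)⁻¹ • -((1 - B₃) *ᵥ L₃)
      + (z - z₃)⁻¹ • ((z₃ - z₁)⁻¹ • (B₃ *ᵥ L₁ + B₁ *ᵥ L₃)
          + (z₃ - z₂)⁻¹ • (B₃ *ᵥ L₂ + B₂ *ᵥ L₃) + B₃ *ᵥ (z₃ • Qm + Qz)))
      + (Qm + (B₁ + B₂ + B₃) *ᵥ Qm) := by
  have e1 : z - z₁ ≠ 0 := sub_ne_zero.mpr hz1
  have e2 : z - z₂ ≠ 0 := sub_ne_zero.mpr hz2
  have e3 : z - z₃ ≠ 0 := sub_ne_zero.mpr hz3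
  have f12 : z₁ - z₂ ≠ 0 := sub_ne_zero.mpr h12
  have f13 : z₁ - z₃ ≠ 0 := sub_ne_zero.mpr h13
  have f23 : z₂ - z₃ ≠ 0 := sub_ne_zero.mpr h23
  have f21 : z₂ - z₁ ≠ 0 := sub_ne_zero.mpr h12.symm
  have f31 : z₃ - z₁ ≠ 0 := sub_ne_zero.mpr h13.symm
  have f32 : z₃ - z₂ ≠ 0 := sub_ne_zero.mpr h23.symm
  simp only [add_mulVec, smul_mulVec, mulVec_add, mulVec_smul, sub_mulVec, one_mulVec]
  match_scalars <;> field_simp <;> ring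

/-- for arbitrary vectors `L₁, L₂, L₃, Q₋₁, Q₀ ∈ ℂ⁴`, the function
`W(z) = Σ L_k/(z − z_k) + Q₋₁·z + Q₀` solves `W' = −A·W` on `ℂ ∖ {z₁,z₂,z₃}` iff
conditions (2.10)–(2.12) hold. -/
theorem stmt_7 (z₁ z₂ z₃ : ℂ) (h12 : z₁ ≠ z₂) (h13 : z₁ ≠ z₃) (h23 : z₂ ≠ z₃)
    (L₁ L₂ L₃ Qm Qz : Fin 4 → ℂ) :
    (∀ z : ℂ, z ≠ z₁ → z ≠ z₂ → z ≠ z₃ →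
        HasDerivAt
          (fun w => (w - z₁)⁻¹ • L₁ + (w - z₂)⁻¹ • L₂ + (w - z₃)⁻¹ • L₃ + w • Qm + Qz)
          (-(Amat z₁ z₂ z₃ z *ᵥ
            ((z - z₁)⁻¹ • L₁ + (z - z₂)⁻¹ • L₂ + (z - z₃)⁻¹ • L₃ + z • Qm + Qz))) z)
    ↔
    (((1 - P1) *ᵥ L₁ = 0 ∧ (1 - P2) *ᵥ L₂ = 0 ∧ (1 - P3) *ᵥ L₃ = 0) ∧
     ((z₁ - z₂)⁻¹ • (P1 *ᵥ L₂ + P2 *ᵥ L₁) + (z₁ - z₃)⁻¹ • (P1 *ᵥ L₃ + P3 *ᵥ L₁)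
        + P1 *ᵥ (z₁ • Qm + Qz) = 0 ∧
      (z₂ - z₁)⁻¹ • (P2 *ᵥ L₁ + P1 *ᵥ L₂) + (z₂ - z₃)⁻¹ • (P2 *ᵥ L₃ + P3 *ᵥ L₂)
        + P2 *ᵥ (z₂ • Qm + Qz) = 0 ∧
      (z₃ - z₁)⁻¹ • (P3 *ᵥ L₁ + P1 *ᵥ L₃) + (z₃ - z₂)⁻¹ • (P3 *ᵥ L₂ + P2 *ᵥ L₃)
        + P3 *ᵥ (z₃ • Qm + Qz) = 0) ∧
     Qm = -((P1 + P2 + P3) *ᵥ Qm)) := by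
  have expand (z : ℂ) (hz1 : z ≠ z₁) (hz2 : z ≠ z₂) (hz3 : z ≠ z₃) :=
    three_poles_deriv_add_mulVec_eq h12 h13 h23 hz1 hz2 hz3 P1 P2 P3 L₁ L₂ L₃ Qm Qz
  constructor
  · intro hW
    obtain ⟨⟨ha1, hb1⟩, ⟨ha2, hb2⟩, ⟨ha3, hb3⟩, hd⟩ :=
      laurent_coeffs_eq_zero_of_three h12 h13 h23 fun z hz1 hz2 hz3 =>
        (expand z hz1 hz2 hz3).symm.trans <| eq_neg_iff_add_eq_zero.mp <|
          (hasDerivAt_three_poles_add_affine hz1 hz2 hz3 L₁ L₂ L₃ Qm Qz).unique (hW z hz1 hz2 hz3)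
    exact ⟨⟨neg_eq_zero.mp ha1, neg_eq_zero.mp ha2, neg_eq_zero.mp ha3⟩, ⟨hb1, hb2, hb3⟩,
      eq_neg_of_add_eq_zero_left hd⟩
  · rintro ⟨⟨ha1, ha2, ha3⟩, ⟨hb1, hb2, hb3⟩, hd⟩ z hz1 hz2 hz3
    refine (hasDerivAt_three_poles_add_affine hz1 hz2 hz3 L₁ L₂ L₃ Qm Qz).congr_deriv ?_
    rw [eq_neg_iff_add_eq_zero, Amat, expand z hz1 hz2 hz3, ha1, ha2, ha3, hb1, hb2, hb3,
      eq_neg_iff_add_eq_zero.mp hd]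
    simp
end
end

section
/- Let n ≥ 3 and let T be the n×n complex matrix T = Σ_{k=1}^{n−1} P(1, k+1), where P(1, k+1) is the permutation matrix of the transposition exchanging coordinates 1 and k+1. Then the characteristic polynomial of T equals (λ − (n−1))·(λ + 1)·(λ − (n−2))^{n−2}; in particular the eigenvalues of T are exactly n−1, n−2 and −1, so the smallest integer eigenvalue of T is −1 and the greatest is n−1. -/
noncomputable section
open Matrix Polynomial

/-- The n×n permutation matrix (over ℂ) of the transposition exchanging coordinates
`i` and `j`. -/
def permMatN (n : ℕ) (i j : Fin n) : Matrix (Fin n) (Fin n) ℂ :=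
  Matrix.of fun k l => if l = Equiv.swap i j k then 1 else 0

lemma Tentry (n : ℕ) (hn : 3 ≤ n) (z : Fin n) (k l : Fin n) :
    (∑ i ∈ Finset.univ.filter (fun i : Fin n => i ≠ z), permMatN n z i) k l
    = if k = z then (if l = z then 0 else 1)
      else ((if l = z then 1 else 0) + (if l = k then ((n:ℂ) - 2) else 0)) := by
  classical
  rw [Matrix.sum_apply]
  simp only [permMatN, of_apply]
  by_cases hk : k = z
  · subst hk
    simp only [if_pos rfl]
    have : ∀ i ∈ Finset.univ.filter (fun i : Fin n => i ≠ k),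
        (if l = Equiv.swap k i k then (1:ℂ) else 0) = if l = i then 1 else 0 := by
      intro i _
      rw [Equiv.swap_apply_left]
    rw [Finset.sum_congr rfl this, Finset.sum_ite_eq]
    simp only [Finset.mem_filter, Finset.mem_univ, true_and]
    by_cases hl : l = k <;> simp [hl]
  · rw [if_neg hk]
    have hkm : k ∈ Finset.univ.filter (fun i : Fin n => i ≠ z) := by
      simp [hk]
    rw [← Finset.add_sum_erase _ _ hkm, Equiv.swap_apply_right]
    have h2 : ∀ i ∈ (Finset.univ.filter (fun i : Fin n => i ≠ z)).erase k,
        (if l = Equiv.swap z i k then (1:ℂ) else 0) = if l = k then 1 else 0 := by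
      intro i hi
      simp only [Finset.mem_erase, Finset.mem_filter, Finset.mem_univ, true_and] at hi
      rw [Equiv.swap_apply_of_ne_of_ne hk (fun h => hi.1 h.symm)]
    rw [Finset.sum_congr rfl h2, Finset.sum_const]
    have hc : ((Finset.univ.filter (fun i : Fin n => i ≠ z)).erase k).card = n - 2 := by
      rw [Finset.filter_ne', Finset.card_erase_of_mem, Finset.card_erase_of_mem (Finset.mem_univ z),
        Finset.card_univ, Fintype.card_fin]
      · omega
      · exact Finset.mem_erase.mpr ⟨hk, Finset.mem_univ k⟩
    rw [hc, nsmul_eq_mul]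
    have : ((n - 2 : ℕ) : ℂ) = (n : ℂ) - 2 := by
      push_cast [Nat.cast_sub (by omega : 2 ≤ n)]; ring
    by_cases hl : l = z
    · simp [hl, Ne.symm hk]
    · by_cases hlk : l = k <;> simp [hl, hlk, this]

lemma det_arrow {K : Type*} [Field K] (n : ℕ) (hn : 3 ≤ n) (z : Fin n) (x a t : K)
    (ht : (x - a) * t = 1) (A : Matrix (Fin n) (Fin n) K)
    (hAe : ∀ k l, A k l = if k = l then (if k = z then x else x - a)
      else (if k = z ∨ l = z then -1 else 0)) :
    A.det = (x - a) ^ n * ((1 + a * t) - ((n : K) - 1) * (t * t)) := by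
  classical
  set U : Matrix (Fin n) (Fin 2) K :=
    Matrix.of (fun k j => if j = 0 then (if k = z then t else 0) else (if k = z then 0 else -t))
    with hU
  set V : Matrix (Fin 2) (Fin n) K :=
    Matrix.of (fun j l => if j = 0 then (if l = z then a else -1)
      else (if l = z then 1 else 0)) with hV
  have hA : A = (x - a) • (1 + U * V) := by
    ext k l
    rw [hAe, Matrix.smul_apply, Matrix.add_apply, Matrix.mul_apply, Fin.sum_univ_two,
      smul_eq_mul, hU, hV]
    by_cases hkl : k = l
    · by_cases hkz : k = z
      · have hlz : l = z := hkl ▸ hkz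
        simp [Matrix.one_apply, hkl, hkz, hlz]
        try (first | ring1 | linear_combination ht | linear_combination -ht | linear_combination (-a) * ht | linear_combination a * ht)
      · have hlz : ¬ l = z := hkl ▸ hkz
        simp [Matrix.one_apply, hkl, hlz, (show ¬ z = l from fun h => hlz h.symm)]
        try (first | ring1 | linear_combination ht | linear_combination -ht | linear_combination (-a) * ht | linear_combination a * ht)
    · by_cases hkz : k = z
      · have hlz : ¬ l = z := fun h => hkl (hkz.trans h.symm)
        simp [Matrix.one_apply, hkl, hkz, hlz, (show ¬ z = l from fun h => hlz h.symm)]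
        try (first | ring1 | linear_combination ht | linear_combination -ht | linear_combination (-a) * ht | linear_combination a * ht)
      · by_cases hlz : l = z
        · simp [Matrix.one_apply, hkl, hkz, hlz, (show ¬ z = k from fun h => hkz h.symm)]
          try (first | ring1 | linear_combination ht | linear_combination -ht | linear_combination (-a) * ht | linear_combination a * ht)
        · simp [Matrix.one_apply, hkl, hkz, hlz, (show ¬ z = k from fun h => hkz h.symm),
            (show ¬ z = l from fun h => hlz h.symm)]
          try (first | ring1 | linear_combination ht | linear_combination -ht | linear_combination (-a) * ht | linear_combination a * ht)
  have hVU00 : (V * U) 0 0 = a * t := by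
    rw [Matrix.mul_apply]
    have h1 : ∀ k : Fin n, V 0 k * U k 0 = if k = z then a * t else 0 := by
      intro k
      simp only [hU, hV, Matrix.of_apply, Fin.isValue, ite_true, if_pos rfl]
      by_cases h : k = z <;> simp [h]
    rw [Finset.sum_congr rfl (fun k _ => h1 k), Finset.sum_ite_eq']
    simp
  have hVU01 : (V * U) 0 1 = ((n : K) - 1) * t := by
    rw [Matrix.mul_apply]
    have h1 : ∀ k : Fin n, V 0 k * U k 1 = t - (if k = z then t else 0) := by
      intro k
      simp only [hU, hV, Matrix.of_apply, Fin.isValue, if_pos rfl,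
        if_neg (by decide : ¬ (1 : Fin 2) = 0)]
      by_cases h : k = z <;> simp [h]
    rw [Finset.sum_congr rfl (fun k _ => h1 k), Finset.sum_sub_distrib, Finset.sum_const,
      Finset.sum_ite_eq', Finset.card_univ, Fintype.card_fin, nsmul_eq_mul]
    simp only [Finset.mem_univ, if_pos]
    ring
  have hVU10 : (V * U) 1 0 = t := by
    rw [Matrix.mul_apply]
    have h1 : ∀ k : Fin n, V 1 k * U k 0 = if k = z then t else 0 := by
      intro k
      simp only [hU, hV, Matrix.of_apply, Fin.isValue, if_pos rfl,
        if_neg (by decide : ¬ (1 : Fin 2) = 0)]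
      by_cases h : k = z <;> simp [h]
    rw [Finset.sum_congr rfl (fun k _ => h1 k), Finset.sum_ite_eq']
    simp
  have hVU11 : (V * U) 1 1 = 0 := by
    rw [Matrix.mul_apply]
    have h1 : ∀ k : Fin n, V 1 k * U k 1 = 0 := by
      intro k
      simp only [hU, hV, Matrix.of_apply, Fin.isValue,
        if_neg (by decide : ¬ (1 : Fin 2) = 0)]
      by_cases h : k = z <;> simp [h]
    rw [Finset.sum_congr rfl (fun k _ => h1 k), Finset.sum_const_zero]
  rw [hA, Matrix.det_smul, Matrix.det_one_add_mul_comm, Matrix.det_fin_two]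
  simp only [Matrix.add_apply, Matrix.one_apply_eq,
    Matrix.one_apply_ne (by decide : (0 : Fin 2) ≠ 1),
    Matrix.one_apply_ne (by decide : (1 : Fin 2) ≠ 0), hVU00, hVU01, hVU10, hVU11,
    Fintype.card_fin, smul_eq_mul]
  ring

lemma main_charpoly (n : ℕ) (hn : 3 ≤ n) (z : Fin n) (T : Matrix (Fin n) (Fin n) ℂ)
    (hTe : ∀ k l : Fin n, T k l =
      if k = z then (if l = z then 0 else 1)
      else ((if l = z then 1 else 0) + (if l = k then ((n:ℂ) - 2) else 0))) :
    T.charpoly = (X - C ((n : ℂ) - 1)) * (X + C 1) * (X - C ((n : ℂ) - 2)) ^ (n - 2) := by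
  classical
  set K := FractionRing (Polynomial ℂ)
  set φ : Polynomial ℂ →+* K := (algebraMap (Polynomial ℂ) K : Polynomial ℂ →+* K)
  have hinj : Function.Injective φ := IsFractionRing.injective (Polynomial ℂ) K
  apply hinj
  set x : K := φ X with hx
  have hCn2 : φ (C ((n:ℂ) - 2)) = (n : K) - 2 := by
    rw [map_sub, map_sub]
    norm_num [map_natCast, map_ofNat]
  have hCn1 : φ (C ((n:ℂ) - 1)) = (n : K) - 1 := by
    rw [map_sub, map_sub]
    norm_num [map_natCast, map_ofNat]
  have hC1 : φ (C (1:ℂ)) = 1 := by simp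
  have hC2 : φ (C (2:ℂ)) = 2 := by norm_num [map_ofNat]
  have hxa : x - ((n:K) - 2) ≠ 0 := by
    have h1 : x - ((n:K) - 2) = φ (X - C ((n:ℂ) - 2)) := by rw [map_sub, hCn2]
    rw [h1]
    intro h
    have := hinj (h.trans (map_zero φ).symm)
    exact Polynomial.X_sub_C_ne_zero ((n:ℂ) - 2) this
  set t : K := (x - ((n:K) - 2))⁻¹ with htdef
  have ht : (x - ((n:K) - 2)) * t = 1 := mul_inv_cancel₀ hxa
  have hAe : ∀ k l : Fin n, ((charmatrix T).map φ) k l =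
      if k = l then (if k = z then x else x - ((n:K) - 2))
      else (if k = z ∨ l = z then -1 else 0) := by
    intro k l
    rw [Matrix.map_apply]
    by_cases hkl : k = l
    · subst hkl
      rw [charmatrix_apply_eq, map_sub, hTe]
      by_cases hkz : k = z
      · simp [hkz, hx]
      · simp [hkz, hCn2, hC2, hx]
    · rw [charmatrix_apply_ne _ _ _ hkl, if_neg hkl, map_neg, hTe]
      by_cases hkz : k = z
      · have hlz : ¬ l = z := fun h => hkl (hkz.trans h.symm)
        simp [hkz, hlz, hC1]
      · by_cases hlz : l = z
        · have hlk : ¬ l = k := fun h => hkl h.symm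
          simp [hkz, hlz, hlk, hC1, (show ¬ z = k from fun h => hkz h.symm)]
        · have hlk : ¬ l = k := fun h => hkl h.symm
          simp [hkz, hlz, hlk]
  have hdet := det_arrow n hn z x ((n:K) - 2) t ht ((charmatrix T).map φ) hAe
  have hφcp : φ T.charpoly = ((charmatrix T).map φ).det := by
    rw [Matrix.charpoly, RingHom.map_det, RingHom.mapMatrix_apply]
  rw [hφcp, hdet]
  simp only [_root_.map_mul, map_pow, map_sub, map_add, hCn1, hCn2, hC1, hC2, map_natCast, map_ofNat, ← hx]
  obtain ⟨m, hm⟩ : ∃ m, n = m + 2 := ⟨n - 2, by omega⟩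
  have h2 : n - 2 = m := by omega
  have hpow : (x - ((n:K) - 2)) ^ n = (x - ((n:K) - 2)) ^ m * (x - ((n:K) - 2)) ^ 2 := by
    rw [← pow_add, show m + 2 = n from hm.symm]
  rw [hpow, h2]
  linear_combination ((x - ((n:K) - 2)) ^ m *
    (((n:K) - 2) * (x - ((n:K) - 2)) - ((n:K) - 1) * ((x - ((n:K) - 2)) * t + 1))) * ht

/-- for `n ≥ 3` and `T = Σ_{k=1}^{n−1} P(1, k+1)`, the characteristic polynomial
of `T` is `(λ − (n−1))·(λ + 1)·(λ − (n−2))^{n−2}`; in particular the eigenvalues of `T` are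
exactly `n−1`, `n−2` and `−1`. -/
theorem stmt_9 (n : ℕ) (hn : 3 ≤ n)
    (T : Matrix (Fin n) (Fin n) ℂ)
    (hT : T = ∑ i ∈ Finset.univ.filter (fun i : Fin n => i ≠ ⟨0, by omega⟩),
      permMatN n ⟨0, by omega⟩ i) :
    T.charpoly = (X - C ((n : ℂ) - 1)) * (X + C 1) * (X - C ((n : ℂ) - 2)) ^ (n - 2) ∧
    spectrum ℂ T = {(n : ℂ) - 1, (n : ℂ) - 2, -1} := by
  have hTe : ∀ k l : Fin n, T k l =
      if k = (⟨0, by omega⟩ : Fin n) then (if l = (⟨0, by omega⟩ : Fin n) then 0 else 1)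
      else ((if l = (⟨0, by omega⟩ : Fin n) then 1 else 0) +
        (if l = k then ((n:ℂ) - 2) else 0)) := by
    intro k l
    rw [hT]
    exact Tentry n hn _ k l
  have hcp := main_charpoly n hn ⟨0, by omega⟩ T hTe
  refine ⟨hcp, ?_⟩
  have heval : ∀ μ : ℂ, μ ∈ spectrum ℂ T ↔ T.charpoly.eval μ = 0 := by
    intro μ
    rw [spectrum.mem_iff, Matrix.isUnit_iff_isUnit_det, isUnit_iff_ne_zero, not_not]
    have hdm : (algebraMap ℂ (Matrix (Fin n) (Fin n) ℂ) μ - T) = (charmatrix T).map (eval μ) := by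
      ext i j
      by_cases hij : i = j
      · subst hij
        simp [charmatrix_apply_eq, Matrix.algebraMap_matrix_apply]
      · simp [charmatrix_apply_ne _ _ _ hij, Matrix.algebraMap_matrix_apply, hij]
    have h2 : ((charmatrix T).map (eval μ)).det = T.charpoly.eval μ := by
      rw [Matrix.charpoly, ← Polynomial.coe_evalRingHom, ← RingHom.mapMatrix_apply,
        ← RingHom.map_det]
    rw [hdm, h2]
  ext μ
  rw [heval μ, hcp]
  simp only [eval_mul, eval_pow, eval_sub, eval_add, eval_X, eval_C, mul_eq_zero,
    pow_eq_zero_iff (by omega : n - 2 ≠ 0), sub_eq_zero, add_eq_zero_iff_eq_neg,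
    Set.mem_insert_iff, Set.mem_singleton_iff]
  tauto
end
end

section
/- The vectors m₁, m₂, m₃ satisfy: (i) (I − P_k)m_k = 0 for k = 1, 2, 3, and (ii) Σ_{j ≠ k} (P_k m_j + P_j m_k)/(z_k − z_j) = 0 for k = 1, 2, 3. -/
noncomputable section
open Matrix Polynomial

set_option maxHeartbeats 1000000 in
/-- the vectors `m₁, m₂, m₃` satisfy conditions (2.10) and (2.11). -/
theorem stmt_12 (z₁ z₂ z₃ : ℂ) (h12 : z₁ ≠ z₂) (h13 : z₁ ≠ z₃) (h23 : z₂ ≠ z₃) :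
    ((1 - P1) *ᵥ mv1 z₁ z₂ z₃ = 0 ∧ (1 - P2) *ᵥ mv2 z₁ z₂ z₃ = 0 ∧
      (1 - P3) *ᵥ mv3 z₁ z₂ z₃ = 0) ∧
    ((z₁ - z₂)⁻¹ • (P1 *ᵥ mv2 z₁ z₂ z₃ + P2 *ᵥ mv1 z₁ z₂ z₃)
        + (z₁ - z₃)⁻¹ • (P1 *ᵥ mv3 z₁ z₂ z₃ + P3 *ᵥ mv1 z₁ z₂ z₃) = 0 ∧
      (z₂ - z₁)⁻¹ • (P2 *ᵥ mv1 z₁ z₂ z₃ + P1 *ᵥ mv2 z₁ z₂ z₃)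
        + (z₂ - z₃)⁻¹ • (P2 *ᵥ mv3 z₁ z₂ z₃ + P3 *ᵥ mv2 z₁ z₂ z₃) = 0 ∧
      (z₃ - z₁)⁻¹ • (P3 *ᵥ mv1 z₁ z₂ z₃ + P1 *ᵥ mv3 z₁ z₂ z₃)
        + (z₃ - z₂)⁻¹ • (P3 *ᵥ mv2 z₁ z₂ z₃ + P2 *ᵥ mv3 z₁ z₂ z₃) = 0) := by
  have h12' : z₁ - z₂ ≠ 0 := sub_ne_zero.mpr h12
  have h13' : z₁ - z₃ ≠ 0 := sub_ne_zero.mpr h13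
  have h23' : z₂ - z₃ ≠ 0 := sub_ne_zero.mpr h23
  have h21' : z₂ - z₁ ≠ 0 := sub_ne_zero.mpr h12.symm
  have h31' : z₃ - z₁ ≠ 0 := sub_ne_zero.mpr h13.symm
  have h32' : z₃ - z₂ ≠ 0 := sub_ne_zero.mpr h23.symm
  refine ⟨⟨?_, ?_, ?_⟩, ?_, ?_, ?_⟩ <;>
  · funext i
    fin_cases i <;>
      simp (config := { decide := true }) only [P1, P2, P3, permMat, mv1, mv2, mv3,
        Matrix.mulVec, Matrix.sub_apply,
        Matrix.one_apply, dotProduct, Fin.sum_univ_four, Equiv.swap_apply_def,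
        Matrix.of_apply, Pi.add_apply, Pi.smul_apply, Pi.zero_apply, smul_eq_mul,
        Matrix.cons_val_zero, Matrix.cons_val_one, Matrix.head_cons,
        Matrix.cons_val_two, Matrix.cons_val_three, Matrix.tail_cons,
        Fin.reduceEq, if_true, if_false, ite_true, ite_false]
    all_goals try norm_num [Fin.ext_iff]
    all_goals try field_simp
    all_goals first | ring1 | (right; ring1) | tauto
end
end
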